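/- arXiv:1612.08693 — 2 statements merged into one kernel-verified Lean document; each statement's English description precedes it below -/
import Mathlib

section
/- Let T be a locally finite tree that is VEL parabolic, i.e., there exists a vertex v and for the edge-extremal-length comparison a measure m on the vertices of T with Σ_u m(u)² < ∞ such that m(γ) = Σ_{u∈γ} m(u) = ∞ for every infinite simple path γ starting at v. Then T is recurrent for simple random walk: the effective resistance from v to infinity is infinite. -/
open SimpleGraph

section Aux

variable {V : Type*} {T : SimpleGraph V} (hconn : T.Connected) (hacyclic : T.IsAcyclic) (v : V)

include hconn hacyclic

/-- In a tree, any path from `v` has length equal to the distance. -/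
private lemma aux_path_length {u : V} (p : T.Walk v u) (hp : p.IsPath) :
    p.length = T.dist v u := by
  obtain ⟨w, hw⟩ := hconn.exists_walk_length_eq_dist v u
  have hwp : w.IsPath := w.isPath_of_length_eq_dist hw
  have : (⟨p, hp⟩ : T.Path v u) = ⟨w, hwp⟩ :=
    (isAcyclic_iff_path_unique.mp hacyclic) _ _
  rw [show p = w from congrArg Subtype.val this, hw]

private lemma aux_mem_support_dist_le {u x : V} (p : T.Walk v u) (hp : p.IsPath)
    (hx : x ∈ p.support) : T.dist v x ≤ p.length := by
  classical
  rw [← aux_path_length hconn hacyclic v (p.takeUntil x hx) (hp.takeUntil hx)]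
  exact p.length_takeUntil_le hx

omit hconn hacyclic in
private lemma aux_concat_isPath {a b : V} (p : T.Walk v a) (hp : p.IsPath)
    (h : T.Adj a b) (hb : b ∉ p.support) : (p.concat h).IsPath := by
  rw [← SimpleGraph.Walk.isPath_reverse_iff, SimpleGraph.Walk.reverse_concat]
  exact (hp.reverse).cons (by simpa using hb)

/-- The endpoint farther from `v` of an edge determines dist: `dist b = dist a + 1`. -/
private lemma aux_parent_step {a b : V} (h : T.Adj a b) (hd : T.dist v a < T.dist v b) :
    T.dist v b = T.dist v a + 1 := by
  classical
  obtain ⟨p, hp⟩ := hconn.exists_walk_length_eq_dist v a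
  have hpath : p.IsPath := p.isPath_of_length_eq_dist hp
  have hb : b ∉ p.support := by
    intro hb
    exact absurd (aux_mem_support_dist_le hconn hacyclic v p hpath hb) (by omega)
  have := aux_path_length hconn hacyclic v (p.concat h)
    (aux_concat_isPath v p hpath h hb)
  rw [SimpleGraph.Walk.length_concat] at this
  omega

/-- In a tree, adjacent vertices have distinct distances from `v`. -/
private lemma aux_adj_dist_lt_or {a b : V} (h : T.Adj a b) :
    T.dist v a < T.dist v b ∨ T.dist v b < T.dist v a := by
  classical
  rcases lt_trichotomy (T.dist v a) (T.dist v b) with h1 | h1 | h1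
  · exact Or.inl h1
  · exfalso
    obtain ⟨p, hp⟩ := hconn.exists_walk_length_eq_dist v a
    have hpath : p.IsPath := p.isPath_of_length_eq_dist hp
    by_cases hb : b ∈ p.support
    · have h2 : T.dist v b = (p.takeUntil b hb).length :=
        (aux_path_length hconn hacyclic v _ (hpath.takeUntil hb)).symm
      have h3 := congrArg SimpleGraph.Walk.length (p.take_spec hb)
      rw [SimpleGraph.Walk.length_append] at h3
      have h4 : (p.dropUntil b hb).length ≠ 0 := fun h0 =>
        h.ne' (SimpleGraph.Walk.eq_of_length_eq_zero h0)
      omega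
    · have := aux_path_length hconn hacyclic v (p.concat h)
        (aux_concat_isPath v p hpath h hb)
      rw [SimpleGraph.Walk.length_concat] at this
      omega
  · exact Or.inr h1

/-- In a tree, a vertex has a unique neighbor closer to `v`. -/
private lemma aux_unique_parent {a b u : V} (h1 : T.Adj a u) (h2 : T.Adj b u)
    (hd1 : T.dist v a < T.dist v u) (hd2 : T.dist v b < T.dist v u) : a = b := by
  obtain ⟨p, hp⟩ := hconn.exists_walk_length_eq_dist v a
  have hppath : p.IsPath := p.isPath_of_length_eq_dist hp
  obtain ⟨q, hq⟩ := hconn.exists_walk_length_eq_dist v b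
  have hqpath : q.IsPath := q.isPath_of_length_eq_dist hq
  have hup : u ∉ p.support := fun hu =>
    absurd (aux_mem_support_dist_le hconn hacyclic v p hppath hu) (by omega)
  have huq : u ∉ q.support := fun hu =>
    absurd (aux_mem_support_dist_le hconn hacyclic v q hqpath hu) (by omega)
  have hP1 := aux_concat_isPath v p hppath h1 hup
  have hP2 := aux_concat_isPath v q hqpath h2 huq
  have : (⟨p.concat h1, hP1⟩ : T.Path v u) = ⟨q.concat h2, hP2⟩ :=
    (isAcyclic_iff_path_unique.mp hacyclic) _ _
  obtain ⟨hv, -⟩ := SimpleGraph.Walk.concat_inj (congrArg Subtype.val this)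
  exact hv

end Aux

/-- Let `T` be a locally finite tree that is VEL parabolic: there is a vertex
`v` and a vertex measure `m ≥ 0` with `Σ_u m(u)² < ∞` such that `m(γ) = Σ_{u∈γ} m(u) = ∞`
(i.e. the series diverges) for every infinite simple path `γ` starting at `v`.  Then `T`
is recurrent for simple random walk: the effective resistance from `v` to infinity is
infinite, which (by Duffin's criterion, effective resistance = edge extremal length) we
express as the existence of an edge measure `m̂ ≥ 0` with `Σ_e m̂(e)² < ∞` such that
`m̂(γ) = ∞` for every infinite simple path `γ` from `v`. -/
theorem tree_VEL_parabolic_implies_recurrent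
    {V : Type*} (T : SimpleGraph V)
    (hconn : T.Connected) (hacyclic : T.IsAcyclic)
    (hlf : ∀ u : V, (T.neighborSet u).Finite)
    (v : V) (m : V → ℝ)
    (hm0 : ∀ u, 0 ≤ m u)
    (hm2 : Summable (fun u => m u ^ 2))
    (hdiv : ∀ γ : ℕ → V, γ 0 = v → Function.Injective γ →
      (∀ n, T.Adj (γ n) (γ (n + 1))) → ¬ Summable (fun n => m (γ n))) :
    ∃ mh : Sym2 V → ℝ,
      (∀ e, 0 ≤ mh e) ∧
      Summable (fun e : T.edgeSet => mh (e : Sym2 V) ^ 2) ∧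
      (∀ γ : ℕ → V, γ 0 = v → Function.Injective γ →
        (∀ n, T.Adj (γ n) (γ (n + 1))) →
        ¬ Summable (fun n => mh s(γ n, γ (n + 1)))) := by
  classical
  -- the edge measure: value of `m` at the endpoint farther from `v`
  set mh : Sym2 V → ℝ := Sym2.lift ⟨fun a b =>
      if T.dist v a < T.dist v b then m b
      else if T.dist v b < T.dist v a then m a else max (m a) (m b), by
    intro a b
    rcases lt_trichotomy (T.dist v a) (T.dist v b) with h | h | h
    · simp [h, asymm h]
    · simp [h, max_comm]
    · simp [h, asymm h]⟩ with hmh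
  have hval : ∀ a b : V, T.dist v a < T.dist v b → mh s(a, b) = m b := by
    intro a b h
    simp [hmh, h]
  have hval' : ∀ a b : V, T.dist v b < T.dist v a → mh s(a, b) = m a := by
    intro a b h
    simp [hmh, h, asymm h]
  refine ⟨mh, ?_, ?_, ?_⟩
  · -- nonnegativity
    intro e
    induction e using Sym2.ind with
    | _ a b =>
      simp only [hmh, Sym2.lift_mk]
      split_ifs
      · exact hm0 b
      · exact hm0 a
      · exact le_max_of_le_left (hm0 a)
  · -- summability
    have hfar : ∀ e : T.edgeSet, ∃ u : V, mh (e : Sym2 V) = m u ∧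
        ∃ a : V, T.Adj a u ∧ (e : Sym2 V) = s(a, u) ∧ T.dist v a < T.dist v u := by
      rintro ⟨e, he⟩
      induction e using Sym2.ind with
      | _ a b =>
        have hab : T.Adj a b := he
        rcases aux_adj_dist_lt_or hconn hacyclic v hab with h | h
        · exact ⟨b, hval a b h, a, hab, rfl, h⟩
        · exact ⟨a, hval' a b h, b, hab.symm, Sym2.eq_swap, h⟩
    choose g hgm a hadj hgedge hgdist using hfar
    have hginj : Function.Injective g := by
      intro e1 e2 hge
      have h2 : T.Adj (a e2) (g e1) := hge ▸ hadj e2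
      have hd2 : T.dist v (a e2) < T.dist v (g e1) := hge ▸ hgdist e2
      have haa : a e1 = a e2 :=
        aux_unique_parent hconn hacyclic v (hadj e1) h2 (hgdist e1) hd2
      apply Subtype.ext
      rw [hgedge e1, hgedge e2, haa, hge]
    have heq : (fun e : T.edgeSet => mh (e : Sym2 V) ^ 2) =
        (fun u => m u ^ 2) ∘ g := by
      funext e
      simp only [Function.comp_apply]
      rw [hgm e]
    rw [heq]
    exact hm2.comp_injective hginj
  · -- divergence along rays
    intro γ h0 hinj hadj hs
    -- every vertex of the ray is at distance `n` from `v`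
    have hW : ∀ n : ℕ, ∃ w : T.Walk v (γ n), w.IsPath ∧ w.length = n := by
      intro n
      induction n using Nat.strong_induction_on with
      | _ n ih =>
        match n with
        | 0 => exact ⟨(SimpleGraph.Walk.nil' (γ 0)).copy h0 rfl, by simp, by simp⟩
        | (m + 1) =>
          obtain ⟨w, hwp, hwl⟩ := ih m (Nat.lt_succ_self m)
          have hdm : T.dist v (γ m) = m := by
            rw [← aux_path_length hconn hacyclic v w hwp, hwl]
          rcases aux_adj_dist_lt_or hconn hacyclic v (hadj m) with h | h
          · have hnot : γ (m + 1) ∉ w.support := by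
              intro hmem
              have := aux_mem_support_dist_le hconn hacyclic v w hwp hmem
              omega
            exact ⟨w.concat (hadj m),
              aux_concat_isPath v w hwp (hadj m) hnot,
              by rw [SimpleGraph.Walk.length_concat, hwl]⟩
          · exfalso
            match m, hdm, h with
            | 0, hdm, h => omega
            | (k + 1), hdm, h =>
              obtain ⟨w', hwp', hwl'⟩ := ih k (by omega)
              have hdk : T.dist v (γ k) = k := by
                rw [← aux_path_length hconn hacyclic v w' hwp', hwl']
              have hd2 : T.dist v (γ (k + 2)) < T.dist v (γ (k + 1)) := h
              have : γ k = γ (k + 2) :=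
                aux_unique_parent hconn hacyclic v (hadj k) (hadj (k + 1)).symm
                  (by omega) (by omega)
              have := hinj this
              omega
    have hdist : ∀ n : ℕ, T.dist v (γ n) = n := by
      intro n
      obtain ⟨w, hwp, hwl⟩ := hW n
      rw [← aux_path_length hconn hacyclic v w hwp, hwl]
    have hsval : (fun n => mh s(γ n, γ (n + 1))) = fun n => m (γ (n + 1)) := by
      funext n
      exact hval _ _ (by rw [hdist n, hdist (n + 1)]; omega)
    rw [hsval] at hs
    exact hdiv γ h0 hinj hadj ((summable_nat_add_iff 1).mp hs)
end

section
/- Let G be an infinite, locally finite, connected graph and suppose there exists a finite set K of vertices such that G∖K has at least two transient connected components. Then G admits a non-constant bounded harmonic function of finite Dirichlet energy; indeed, the function h(v) = probability that simple random walk started at v eventually stays in a fixed one of these transient components is such a function. -/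
/-!
Let `χ` be the indicator of `W₁`. Its gradient `u` is supported on the finitely many edges at `K`,
so it lies in `ℓ²` of the oriented edges. Subtracting from `u` its projection onto the closure of
the gradients of finitely supported functions leaves `v`, orthogonal to every `∇δₓ` and hence
harmonic; `v` is the limit of `∇(χ - gₙ)` with `gₙ` finitely supported. Against a unit flow `θ`
out of `a` one has `⟪∇g, θ⟫ = 2 g(a)`, so `(χ - gₙ)(a₁)` converges, and by connectedness `χ - gₙ`
converges pointwise to some `h` with `∇h = v`. The transient flows `θᵢ` live where `∇χ = 0`, so
`h(a₁) = 1 + ⟪v, θ₁⟫ / 2` and `h(a₂) = ⟪v, θ₂⟫ / 2`: a constant `h` forces `v = 0` and `1 = 0`.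
Truncating `χ - gₙ` to `[0, 1]` keeps it in `χ + (finitely supported)` without raising its energy,
so by Pythagoras its gradients also converge to `v`; thus `h` and its truncation have the same
gradient and differ by a constant, which bounds `h`.
-/

open scoped Classical

noncomputable section

/-- The graph `G` with the vertex set `K` deleted. -/
def avoidGraph {V : Type*} (G : SimpleGraph V) (K : Set V) : SimpleGraph V where
  Adj u w := G.Adj u w ∧ u ∉ K ∧ w ∉ K
  symm := by constructor; intro u w h; exact ⟨h.1.symm, h.2.2, h.2.1⟩
  loopless := by constructor; intro u h; exact G.loopless.irrefl u h.1

/-- `W` is a connected component of `G ∖ K`: it avoids `K`, it is nonempty, and it is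
exactly the set of vertices reachable from any of its points in `G ∖ K`. -/
def IsComponentAvoiding {V : Type*} (G : SimpleGraph V) (K : Set V) (W : Set V) : Prop :=
  (∀ w ∈ W, w ∉ K) ∧ W.Nonempty ∧
    ∀ a ∈ W, W = {u | (avoidGraph G K).Reachable a u}

/-- Transience of the induced subgraph on `W` (T. Lyons' criterion): there is a unit flow
`θ` from some `a ∈ W` to infinity, supported on edges inside `W`, with finite energy. -/
def TransientOn {V : Type*} (G : SimpleGraph V) (W : Set V) : Prop :=
  ∃ (a : V) (θ : V → V → ℝ), a ∈ W ∧
    (∀ x y, θ x y = - θ y x) ∧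
    (∀ x y, θ x y ≠ 0 → G.Adj x y ∧ x ∈ W ∧ y ∈ W) ∧
    (∀ x ∈ W, x ≠ a → ∑' y, θ x y = 0) ∧
    (∑' y, θ a y = 1) ∧
    Summable (fun p : V × V => θ p.1 p.2 ^ 2)

/-- `h` is harmonic on `G`: `deg(v)·h(v) = Σ_{u∼v} h(u)` for every `v`. -/
def HarmonicOn {V : Type*} (G : SimpleGraph V) [∀ u : V, Fintype (G.neighborSet u)]
    (h : V → ℝ) : Prop :=
  ∀ u : V, (G.degree u : ℝ) * h u = ∑ w ∈ G.neighborFinset u, h w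

/-- `h` has finite Dirichlet energy: `(1/2)·Σ over oriented edges of (h(e⁻)−h(e⁺))² < ∞`. -/
def FiniteDirichletEnergy {V : Type*} (G : SimpleGraph V) (h : V → ℝ) : Prop :=
  Summable (fun p : V × V => if G.Adj p.1 p.2 then (h p.1 - h p.2) ^ 2 else 0)

open scoped RealInnerProductSpace
open Filter Topology Function Finset

theorem memℓp_two_iff_summable_sq {ι : Type*} {f : ι → ℝ} :
    Memℓp f 2 ↔ Summable fun i => f i ^ 2 := by
  rw [memℓp_gen_iff (by norm_num)]
  simp

theorem tendsto_lp_apply {ι α : Type*} {l : Filter α} {y : α → lp (fun _ : ι => ℝ) 2}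
    {v : lp (fun _ : ι => ℝ) 2} (hy : Tendsto y l (𝓝 v)) (i : ι) :
    Tendsto (fun n => y n i) l (𝓝 (v i)) :=
  ((lp.evalCLM ℝ (fun _ : ι => ℝ) 2 i).continuous.tendsto v).comp hy

theorem inner_eq_zero_of_apply_eq_zero {ι : Type*} {u w : lp (fun _ : ι => ℝ) 2}
    (h : ∀ i, w i ≠ 0 → u i = 0) : ⟪u, w⟫ = 0 := by
  rw [lp.inner_eq_tsum]
  refine (tsum_congr fun i => ?_).trans tsum_zero
  by_cases hi : w i = 0
  · simp [hi]
  · simp [h i hi]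

/-- `v` is the least-norm point of `v + K`; minimizing sequences in `v + K` converge to it. -/
theorem tendsto_of_norm_le_of_sub_mem {E : Type*} [NormedAddCommGroup E]
    [InnerProductSpace ℝ E] {K : Submodule ℝ E} {v : E} (hv : v ∈ Kᗮ) {α : Type*}
    {l : Filter α} {x y : α → E} (hy : Tendsto y l (𝓝 v)) (hxK : ∀ n, x n - v ∈ K)
    (hxy : ∀ n, ‖x n‖ ≤ ‖y n‖) : Tendsto x l (𝓝 v) := by
  have hpyth : ∀ n, ‖x n - v‖ ^ 2 = ‖x n‖ ^ 2 - ‖v‖ ^ 2 := fun n => by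
    have := norm_add_sq_real v (x n - v)
    rw [add_sub_cancel, K.inner_left_of_mem_orthogonal (hxK n) hv] at this
    linarith
  have hy2 : Tendsto (fun n => ‖y n‖ ^ 2 - ‖v‖ ^ 2) l (𝓝 0) := by
    rw [← sub_self (‖v‖ ^ 2)]
    exact (hy.norm.pow 2).sub_const _
  have hx2 : Tendsto (fun n => ‖x n - v‖ ^ 2) l (𝓝 0) :=
    squeeze_zero (fun _ => sq_nonneg _)
      (fun n => by rw [hpyth]; gcongr; exact hxy n) hy2
  rw [tendsto_iff_norm_sub_tendsto_zero]
  simpa [Real.sqrt_sq (norm_nonneg _)] using hx2.sqrt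

namespace SimpleGraph

variable {V : Type*} (G : SimpleGraph V)

def grad (f : V → ℝ) (x y : V) : ℝ := if G.Adj x y then f x - f y else 0

structure IsFlow (θ : V → V → ℝ) : Prop where
  antisymm : ∀ x y, θ x y = -θ y x
  adj_of_ne_zero : ∀ x y, θ x y ≠ 0 → G.Adj x y

theorem isFlow_grad (f : V → ℝ) : G.IsFlow (G.grad f) where
  antisymm x y := by
    by_cases h : G.Adj x y
    · simp [grad, h, h.symm]
    · simp [grad, h, mt G.adj_symm h]
  adj_of_ne_zero x y h := by
    by_contra hxy
    simp [grad, hxy] at h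

theorem grad_add (f g : V → ℝ) (x y : V) :
    G.grad (f + g) x y = G.grad f x y + G.grad g x y := by
  unfold grad; split_ifs <;> simp only [Pi.add_apply, add_zero]; ring

theorem grad_sub (f g : V → ℝ) (x y : V) :
    G.grad (f - g) x y = G.grad f x y - G.grad g x y := by
  unfold grad; split_ifs <;> simp only [Pi.sub_apply, sub_zero]; ring

theorem grad_smul (c : ℝ) (f : V → ℝ) (x y : V) : G.grad (c • f) x y = c * G.grad f x y := by
  unfold grad; split_ifs <;> simp only [Pi.smul_apply, smul_eq_mul, mul_zero]; ring

theorem abs_grad_comp_le {φ : ℝ → ℝ} (hφ : LipschitzWith 1 φ) (f : V → ℝ) (x y : V) :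
    |G.grad (φ ∘ f) x y| ≤ |G.grad f x y| := by
  unfold grad
  split_ifs
  · simpa [Real.dist_eq] using hφ.dist_le_mul (f x) (f y)
  · rfl

theorem grad_eq_zero_of_iff_mem {W : Set V} {x y : V} (h : x ∈ W ↔ y ∈ W) :
    G.grad (W.indicator 1) x y = 0 := by
  by_cases hx : x ∈ W
  · simp [grad, hx, h.1 hx]
  · simp [grad, hx, mt h.2 hx]

variable {G}

theorem IsFlow.eq_zero_of_not_adj {θ : V → V → ℝ} (hθ : G.IsFlow θ) {x y : V}
    (h : ¬G.Adj x y) : θ x y = 0 :=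
  not_not.1 (mt (hθ.adj_of_ne_zero x y) h)

theorem Preconnected.induction_on (hG : G.Preconnected) {P : V → Prop} {a : V} (ha : P a)
    (step : ∀ x y, G.Adj x y → P x → P y) (x : V) : P x := by
  induction (reachable_iff_reflTransGen a x).1 (hG a x) with
  | refl => exact ha
  | tail _ hxy ih => exact step _ _ hxy ih

theorem exists_forall_abs_le_of_grad_eq (hG : G.Connected) {f g : V → ℝ}
    (hfg : G.grad f = G.grad g) {M : ℝ} (hg : ∀ x, |g x| ≤ M) : ∃ C, ∀ x, |f x| ≤ C := by
  obtain ⟨a⟩ := hG.nonempty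
  have hdiff : ∀ x, f x - g x = f a - g a := by
    refine hG.preconnected.induction_on rfl fun x y hxy hx => ?_
    have := congrFun (congrFun hfg x) y
    simp only [grad, if_pos hxy] at this
    linarith
  refine ⟨M + |f a - g a|, fun x => ?_⟩
  calc |f x| = |g x + (f a - g a)| := by rw [← hdiff x]; ring_nf
    _ ≤ M + |f a - g a| := (abs_add_le _ _).trans (by linarith [hg x])

theorem tendsto_grad {α : Type*} {l : Filter α} {F : α → V → ℝ} {f : V → ℝ}
    (hF : ∀ x, Tendsto (F · x) l (𝓝 (f x))) (x y : V) :
    Tendsto (fun n => G.grad (F n) x y) l (𝓝 (G.grad f x y)) := by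
  unfold grad
  split_ifs
  exacts [(hF x).sub (hF y), tendsto_const_nhds]

theorem exists_tendsto_of_tendsto_grad (hG : G.Preconnected) {α : Type*} {l : Filter α}
    {F : α → V → ℝ} (hF : ∀ x y, ∃ d, Tendsto (fun n => G.grad (F n) x y) l (𝓝 d)) {a : V}
    {c : ℝ} (ha : Tendsto (F · a) l (𝓝 c)) : ∃ f : V → ℝ, ∀ x, Tendsto (F · x) l (𝓝 (f x)) := by
  have hconv : ∀ x, ∃ L, Tendsto (F · x) l (𝓝 L) := by
    refine hG.induction_on ⟨c, ha⟩ fun x y hxy ⟨L, hL⟩ => ?_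
    obtain ⟨d, hd⟩ := hF x y
    refine ⟨L - d, (hL.sub hd).congr fun n => ?_⟩
    simp only [grad, if_pos hxy]
    ring
  choose f hf using hconv
  exact ⟨f, hf⟩

abbrev EdgeSpace (V : Type*) := lp (fun _ : V × V => ℝ) 2

theorem coe_eq_grad_of_tendsto {α : Type*} {l : Filter α} [l.NeBot] {y : α → EdgeSpace V}
    {v : EdgeSpace V} (hy : Tendsto y l (𝓝 v)) {F : α → V → ℝ}
    (hyF : ∀ n, ⇑(y n) = uncurry (G.grad (F n))) {f : V → ℝ}
    (hF : ∀ x, Tendsto (F · x) l (𝓝 (f x))) : ⇑v = uncurry (G.grad f) := by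
  funext ⟨x, x'⟩
  refine tendsto_nhds_unique (tendsto_lp_apply hy (x, x')) ?_
  simpa only [hyF, uncurry_apply_pair] using tendsto_grad hF x x'

theorem finiteDirichletEnergy_of_coe_eq_grad {v : EdgeSpace V} {f : V → ℝ}
    (hvf : ⇑v = uncurry (G.grad f)) : FiniteDirichletEnergy G f := by
  have hv := memℓp_two_iff_summable_sq.1 (lp.memℓp v)
  rw [hvf] at hv
  refine hv.congr fun p => ?_
  simp only [uncurry, grad]
  split_ifs <;> simp

variable (G) [∀ x, Fintype (G.neighborSet x)]

def divergence (θ : V → V → ℝ) (x : V) : ℝ := ∑ y ∈ G.neighborFinset x, θ x y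

theorem divergence_grad (f : V → ℝ) (x : V) :
    G.divergence (G.grad f) x = G.degree x * f x - ∑ y ∈ G.neighborFinset x, f y := by
  rw [divergence, ← card_neighborFinset_eq_degree, ← nsmul_eq_mul, ← sum_const,
    ← sum_sub_distrib]
  exact sum_congr rfl fun y hy => if_pos ((G.mem_neighborFinset x y).1 hy)

theorem tsum_grad_mul_eq {θ : V → V → ℝ} (hθ : G.IsFlow θ) {f : V → ℝ} {s : Finset V}
    (hs : ∀ x ∉ s, f x = 0) :
    ∑' p : V × V, G.grad f p.1 p.2 * θ p.1 p.2 = 2 * ∑ x ∈ s, f x * G.divergence θ x := by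
  set A := s.biUnion fun x => G.neighborFinset x
  set φ : V × V → ℝ := fun p => f p.1 * θ p.1 p.2
  have hφ : ∀ p ∉ s ×ˢ A, φ p = 0 := by
    rintro ⟨x, y⟩ hp
    by_contra hne
    obtain ⟨hfx, hθxy⟩ := mul_ne_zero_iff.1 hne
    have hx : x ∈ s := by_contra fun hx => hfx (hs x hx)
    exact hp (mem_product.2 ⟨hx, mem_biUnion.2 ⟨x, hx,
      (G.mem_neighborFinset x y).2 (hθ.adj_of_ne_zero x y hθxy)⟩⟩)
  have hsum : Summable φ := summable_of_ne_finset_zero hφ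
  have hterm : ∀ p : V × V, G.grad f p.1 p.2 * θ p.1 p.2 = φ p + φ p.swap := by
    rintro ⟨x, y⟩
    by_cases hxy : G.Adj x y
    · simp only [φ, grad, if_pos hxy, Prod.fst_swap, Prod.snd_swap, hθ.antisymm y x]
      ring
    · simp [φ, grad, hxy, hθ.eq_zero_of_not_adj hxy, hθ.eq_zero_of_not_adj (mt G.adj_symm hxy)]
  have hφs : ∑' p, φ p = ∑ x ∈ s, f x * G.divergence θ x := by
    rw [tsum_eq_sum hφ, sum_product]
    refine sum_congr rfl fun x hx => ?_
    rw [divergence, mul_sum, sum_subset (subset_biUnion_of_mem (fun x => G.neighborFinset x) hx)]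
    intro y _ hy
    rw [hθ.eq_zero_of_not_adj (by simpa using hy), mul_zero]
  calc ∑' p : V × V, G.grad f p.1 p.2 * θ p.1 p.2 = ∑' p, (φ p + φ p.swap) := tsum_congr hterm
    _ = ∑' p, φ p + ∑' p, φ (Equiv.prodComm V V p) :=
      hsum.tsum_add ((Equiv.prodComm V V).summable_iff.2 hsum)
    _ = 2 * ∑ x ∈ s, f x * G.divergence θ x := by rw [Equiv.tsum_eq, hφs]; ring

theorem memℓp_grad {f : V → ℝ} {S : Set V} (hS : S.Finite)
    (hf : ∀ x y, G.grad f x y ≠ 0 → x ∈ S ∨ y ∈ S) : Memℓp (uncurry (G.grad f)) 2 := by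
  refine (memℓp_zero ((hS.biUnion fun x _ =>
    ((Set.finite_singleton x).prod (G.neighborSet x).toFinite).union
      ((G.neighborSet x).toFinite.prod (Set.finite_singleton x))).subset ?_)).of_exponent_ge
    (by norm_num)
  rintro ⟨x, y⟩ hxy
  have hadj : G.Adj x y := (G.isFlow_grad f).adj_of_ne_zero x y hxy
  rcases hf x y hxy with hx | hy
  · exact Set.mem_biUnion hx (Or.inl ⟨rfl, hadj⟩)
  · exact Set.mem_biUnion hy (Or.inr ⟨hadj.symm, rfl⟩)

def gradFinsupp : (V →₀ ℝ) →ₗ[ℝ] EdgeSpace V where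
  toFun f := ⟨uncurry (G.grad f), G.memℓp_grad f.hasFiniteSupport fun x y hxy => by
    by_contra! h
    simp_all [grad]⟩
  map_add' f g := lp.ext <| funext fun ⟨x, y⟩ => by
    simp only [Finsupp.coe_add, uncurry_apply_pair, grad_add, AddSubgroup.coe_add]; rfl
  map_smul' c f := lp.ext <| funext fun ⟨x, y⟩ => by simp [grad_smul]

theorem coe_gradFinsupp (f : V →₀ ℝ) : ⇑(G.gradFinsupp f) = uncurry (G.grad f) := rfl

theorem coe_sub_gradFinsupp {u : EdgeSpace V} {χ : V → ℝ} (hu : ⇑u = uncurry (G.grad χ))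
    (f : V →₀ ℝ) : ⇑(u - G.gradFinsupp f) = uncurry (G.grad (χ - f)) := by
  funext ⟨x, y⟩
  simp only [lp.coeFn_sub, Pi.sub_apply, hu, coe_gradFinsupp, uncurry_apply_pair, grad_sub]

abbrev gradClosure : Submodule ℝ (EdgeSpace V) :=
  (LinearMap.range G.gradFinsupp).topologicalClosure

def harmonicPart (u : EdgeSpace V) : EdgeSpace V := u - G.gradClosure.starProjection u

theorem harmonicPart_mem_orthogonal (u : EdgeSpace V) : G.harmonicPart u ∈ G.gradClosureᗮ :=
  G.gradClosure.sub_starProjection_mem_orthogonal u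

theorem sub_harmonicPart_mem (u : EdgeSpace V) : u - G.harmonicPart u ∈ G.gradClosure := by
  rw [harmonicPart, sub_sub_cancel]
  exact G.gradClosure.starProjection_apply_mem u

theorem exists_tendsto_harmonicPart (u : EdgeSpace V) : ∃ g : ℕ → V →₀ ℝ,
    Tendsto (fun n => u - G.gradFinsupp (g n)) atTop (𝓝 (G.harmonicPart u)) := by
  obtain ⟨z, hz, hlim⟩ := mem_closure_iff_seq_limit.1 (G.sub_harmonicPart_mem u)
  choose g hg using hz
  refine ⟨g, ?_⟩
  simpa only [hg, sub_sub_cancel] using tendsto_const_nhds (x := u) |>.sub hlim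

theorem inner_gradFinsupp_eq {θ : V → V → ℝ} (hθ : G.IsFlow θ) {w : EdgeSpace V}
    (hw : ⇑w = uncurry θ) (f : V →₀ ℝ) :
    ⟪G.gradFinsupp f, w⟫ = 2 * ∑ x ∈ f.support, f x * G.divergence θ x := by
  rw [lp.inner_eq_tsum, ← G.tsum_grad_mul_eq hθ fun x hx => Finsupp.notMem_support_iff.1 hx]
  refine tsum_congr fun p => ?_
  simp only [coe_gradFinsupp, hw, RCLike.inner_apply, Real.ringHom_apply]
  exact mul_comm _ _

theorem harmonicOn_of_mem_orthogonal {v : EdgeSpace V} (hv : v ∈ G.gradClosureᗮ) {f : V → ℝ}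
    (hvf : ⇑v = uncurry (G.grad f)) : HarmonicOn G f := by
  intro x
  have h0 : ⟪G.gradFinsupp (Finsupp.single x 1), v⟫ = 0 :=
    Submodule.inner_right_of_mem_orthogonal
      (Submodule.le_topologicalClosure _ (LinearMap.mem_range_self _ _)) hv
  rw [G.inner_gradFinsupp_eq (G.isFlow_grad f) hvf, Finsupp.support_single _ one_ne_zero,
    sum_singleton, Finsupp.single_eq_same, one_mul, divergence_grad] at h0
  linarith

theorem inner_gradFinsupp_eq_of_divergence {θ : V → V → ℝ} (hθ : G.IsFlow θ) {a : V}
    (hdiv : ∀ x, G.divergence θ x = if x = a then 1 else 0) {w : EdgeSpace V}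
    (hw : ⇑w = uncurry θ) (f : V →₀ ℝ) : ⟪G.gradFinsupp f, w⟫ = 2 * f a := by
  rw [G.inner_gradFinsupp_eq hθ hw]
  simp_rw [hdiv, mul_ite, mul_one, mul_zero, sum_ite_eq']
  split_ifs with ha
  · rfl
  · rw [Finsupp.notMem_support_iff.1 ha]

theorem tendsto_apply_of_divergence {θ : V → V → ℝ} (hθ : G.IsFlow θ) {a : V}
    (hdiv : ∀ x, G.divergence θ x = if x = a then 1 else 0) {w : EdgeSpace V}
    (hw : ⇑w = uncurry θ) {u : EdgeSpace V} (huw : ⟪u, w⟫ = 0) (χ : V → ℝ) {α : Type*}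
    {l : Filter α} {g : α → V →₀ ℝ} {v : EdgeSpace V}
    (hg : Tendsto (fun n => u - G.gradFinsupp (g n)) l (𝓝 v)) :
    Tendsto (fun n => χ a - g n a) l (𝓝 (χ a + ⟪v, w⟫ / 2)) := by
  have h : ∀ n, χ a - g n a = χ a + ⟪u - G.gradFinsupp (g n), w⟫ / 2 := fun n => by
    rw [inner_sub_left, huw, G.inner_gradFinsupp_eq_of_divergence hθ hdiv hw]
    ring
  simp_rw [h]
  exact tendsto_const_nhds.add ((hg.inner tendsto_const_nhds).div_const 2)

/-- `φ ∘ (χ - gₙ)` still differs from `χ` by a finitely supported function and has no larger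
energy, so its gradients converge to the harmonic part too. -/
theorem coe_harmonicPart_eq_grad_comp {u : EdgeSpace V} {χ : V → ℝ}
    (hu : ⇑u = uncurry (G.grad χ)) {φ : ℝ → ℝ} (hφ : LipschitzWith 1 φ)
    (hφχ : ∀ x, φ (χ x) = χ x) {g : ℕ → V →₀ ℝ}
    (hg : Tendsto (fun n => u - G.gradFinsupp (g n)) atTop (𝓝 (G.harmonicPart u))) {h : V → ℝ}
    (hh : ∀ x, Tendsto (fun n => χ x - g n x) atTop (𝓝 (h x))) :
    ⇑(G.harmonicPart u) = uncurry (G.grad (φ ∘ h)) := by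
  have hfin : ∀ n, (Function.support (φ ∘ (χ - ⇑(g n)) - χ)).Finite := fun n =>
    (g n).hasFiniteSupport.subset fun x hx => by
      contrapose! hx
      simp [Function.notMem_support.1 hx, hφχ]
  set k : ℕ → V →₀ ℝ := fun n => Finsupp.ofSupportFinite _ (hfin n)
  set y : ℕ → EdgeSpace V := fun n => u + G.gradFinsupp (k n)
  have hy : ∀ n, ⇑(y n) = uncurry (G.grad (φ ∘ (χ - ⇑(g n)))) := fun n => by
    funext ⟨x, x'⟩
    simp only [y, k, lp.coeFn_add, Pi.add_apply, hu, coe_gradFinsupp, uncurry_apply_pair,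
      Finsupp.ofSupportFinite_coe, ← grad_add, add_sub_cancel]
  have hlim : Tendsto y atTop (𝓝 (G.harmonicPart u)) := by
    refine tendsto_of_norm_le_of_sub_mem (G.harmonicPart_mem_orthogonal u) hg (fun n => ?_)
      (fun n => ?_)
    · rw [show y n - G.harmonicPart u = (u - G.harmonicPart u) + G.gradFinsupp (k n) by
        simp only [y]; abel]
      exact add_mem (G.sub_harmonicPart_mem u)
        (Submodule.le_topologicalClosure _ (LinearMap.mem_range_self _ _))
    · refine lp.norm_mono two_ne_zero fun ⟨x, x'⟩ => ?_
      simpa only [hy, G.coe_sub_gradFinsupp hu, Real.norm_eq_abs, uncurry_apply_pair] using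
        G.abs_grad_comp_le hφ (χ - ⇑(g n)) x x'
  exact coe_eq_grad_of_tendsto hlim hy fun x => (hφ.continuous.tendsto _).comp (hh x)

variable {G}

theorem exists_tendsto_and_coe_eq_grad (hG : G.Preconnected) {u : EdgeSpace V} {χ : V → ℝ}
    (hu : ⇑u = uncurry (G.grad χ)) {g : ℕ → V →₀ ℝ} {v : EdgeSpace V}
    (hg : Tendsto (fun n => u - G.gradFinsupp (g n)) atTop (𝓝 v)) {a : V} {c : ℝ}
    (ha : Tendsto (fun n => χ a - g n a) atTop (𝓝 c)) :
    ∃ h : V → ℝ, (∀ x, Tendsto (fun n => χ x - g n x) atTop (𝓝 (h x))) ∧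
      ⇑v = uncurry (G.grad h) := by
  have hcoe := G.coe_sub_gradFinsupp hu
  obtain ⟨h, hh⟩ := exists_tendsto_of_tendsto_grad hG (F := fun n => χ - g n)
    (fun x y => ⟨v (x, y), by simpa [hcoe] using tendsto_lp_apply hg (x, y)⟩) ha
  exact ⟨h, hh, coe_eq_grad_of_tendsto hg (fun n => hcoe (g n)) hh⟩

theorem exists_forall_abs_le_of_coe_harmonicPart_eq_grad (hG : G.Connected) {u : EdgeSpace V}
    {χ : V → ℝ} (hu : ⇑u = uncurry (G.grad χ)) (hχ : ∀ x, χ x ∈ Set.Icc 0 1)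
    {g : ℕ → V →₀ ℝ}
    (hg : Tendsto (fun n => u - G.gradFinsupp (g n)) atTop (𝓝 (G.harmonicPart u))) {h : V → ℝ}
    (hh : ∀ x, Tendsto (fun n => χ x - g n x) atTop (𝓝 (h x)))
    (hvh : ⇑(G.harmonicPart u) = uncurry (G.grad h)) : ∃ C, ∀ x, |h x| ≤ C := by
  set φ : ℝ → ℝ := fun t => Set.projIcc 0 1 zero_le_one t
  have hφ : LipschitzWith 1 φ := LipschitzWith.of_dist_le_mul fun s t => by
    simpa [Real.dist_eq] using Set.abs_projIcc_sub_projIcc zero_le_one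
  have hclamp := G.coe_harmonicPart_eq_grad_comp hu hφ
    (fun x => by simp [φ, Set.projIcc_of_mem _ (hχ x)]) hg hh
  refine exists_forall_abs_le_of_grad_eq hG (uncurry_injective (hvh.symm.trans hclamp))
    (M := 1) fun x => ?_
  obtain ⟨hx₀, hx₁⟩ := (Set.projIcc (0 : ℝ) 1 zero_le_one (h x)).2
  show |(Set.projIcc (0 : ℝ) 1 zero_le_one (h x) : ℝ)| ≤ 1
  exact abs_le.2 ⟨by linarith, hx₁⟩

end SimpleGraph

section Components

variable {V : Type*} {G : SimpleGraph V} {K W : Set V}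

theorem IsComponentAvoiding.mem_of_adj (hW : IsComponentAvoiding G K W) {x y : V} (hx : x ∈ W)
    (hxy : G.Adj x y) (hy : y ∉ K) : y ∈ W := by
  rw [hW.2.2 x hx]
  exact SimpleGraph.Adj.reachable ⟨hxy, hW.1 x hx, hy⟩

theorem IsComponentAvoiding.disjoint {W' : Set V} (hW : IsComponentAvoiding G K W)
    (hW' : IsComponentAvoiding G K W') (hne : W ≠ W') : Disjoint W W' :=
  Set.disjoint_left.2 fun x hx hx' => hne ((hW.2.2 x hx).trans (hW'.2.2 x hx').symm)

theorem inner_grad_indicator_eq_zero {S : Set V} (hS : S ⊆ W ∨ Disjoint S W)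
    {θ : V → V → ℝ} (hθ : ∀ x y, θ x y ≠ 0 → x ∈ S ∧ y ∈ S) {u w : SimpleGraph.EdgeSpace V}
    (hu : ⇑u = uncurry (G.grad (W.indicator 1))) (hw : ⇑w = uncurry θ) : ⟪u, w⟫ = 0 :=
  inner_eq_zero_of_apply_eq_zero fun ⟨x, y⟩ hp => by
    obtain ⟨hx, hy⟩ := hθ x y (by simpa [hw] using hp)
    rw [hu, uncurry_apply_pair]
    refine G.grad_eq_zero_of_iff_mem ?_
    rcases hS with hS | hS
    exacts [iff_of_true (hS hx) (hS hy),
      iff_of_false (hS.notMem_of_mem_left hx) (hS.notMem_of_mem_left hy)]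

variable [∀ x, Fintype (G.neighborSet x)]

theorem IsComponentAvoiding.memℓp_grad_indicator (hK : K.Finite)
    (hW : IsComponentAvoiding G K W) : Memℓp (uncurry (G.grad (W.indicator 1))) 2 :=
  G.memℓp_grad hK fun x y hxy => by
    by_contra! hxyK
    have hadj := (G.isFlow_grad _).adj_of_ne_zero x y hxy
    exact hxy (G.grad_eq_zero_of_iff_mem
      ⟨fun hx => hW.mem_of_adj hx hadj hxyK.2, fun hy => hW.mem_of_adj hy hadj.symm hxyK.1⟩)

theorem TransientOn.exists_flow (h : TransientOn G W) : ∃ a ∈ W, ∃ θ : V → V → ℝ,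
    G.IsFlow θ ∧ (∀ x y, θ x y ≠ 0 → x ∈ W ∧ y ∈ W) ∧
    (∀ x, G.divergence θ x = if x = a then 1 else 0) ∧ Memℓp (uncurry θ) 2 := by
  obtain ⟨a, θ, ha, hanti, hsupp, hdiv, hunit, hsq⟩ := h
  have hθ : G.IsFlow θ := ⟨hanti, fun x y h => (hsupp x y h).1⟩
  refine ⟨a, ha, θ, hθ, fun x y h => (hsupp x y h).2, fun x => ?_,
    memℓp_two_iff_summable_sq.2 hsq⟩
  have htsum : ∑' y, θ x y = G.divergence θ x :=
    tsum_eq_sum fun y hy => hθ.eq_zero_of_not_adj (by simpa using hy)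
  rw [← htsum]
  split_ifs with hxa
  · rwa [hxa]
  by_cases hx : x ∈ W
  · exact hdiv x hx hxa
  · rw [show θ x = 0 from funext fun y => by_contra fun h => hx (hsupp x y h).2.1]
    exact tsum_zero

end Components

/-- Let `G` be an infinite, locally finite, connected graph, and suppose there
is a finite vertex set `K` such that `G ∖ K` has at least two transient connected
components.  Then `G` admits a non-constant bounded harmonic function of finite Dirichlet
energy. -/
theorem two_transient_components_harmonic_dirichlet
    {V : Type*} [Infinite V] (G : SimpleGraph V)
    [∀ u : V, Fintype (G.neighborSet u)]
    (hconn : G.Connected)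
    (K : Set V) (hK : K.Finite)
    (W₁ W₂ : Set V)
    (hW₁ : IsComponentAvoiding G K W₁) (hW₂ : IsComponentAvoiding G K W₂)
    (hne : W₁ ≠ W₂)
    (ht₁ : TransientOn G W₁) (ht₂ : TransientOn G W₂) :
    ∃ h : V → ℝ,
      HarmonicOn G h ∧
      (∃ C : ℝ, ∀ u, |h u| ≤ C) ∧
      FiniteDirichletEnergy G h ∧
      ¬ (∀ u w : V, h u = h w) := by
  obtain ⟨a₁, ha₁, θ₁, hθ₁, hθ₁W, hdiv₁, hθ₁ℓ⟩ := ht₁.exists_flow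
  obtain ⟨a₂, ha₂, θ₂, hθ₂, hθ₂W, hdiv₂, hθ₂ℓ⟩ := ht₂.exists_flow
  have hdisj := hW₁.disjoint hW₂ hne
  set χ := W₁.indicator (1 : V → ℝ)
  set u : SimpleGraph.EdgeSpace V := ⟨uncurry (G.grad χ), hW₁.memℓp_grad_indicator hK⟩
  obtain ⟨g, hg⟩ := G.exists_tendsto_harmonicPart u
  have hlim₁ := G.tendsto_apply_of_divergence hθ₁ hdiv₁ (w := ⟨_, hθ₁ℓ⟩) rfl
    (inner_grad_indicator_eq_zero (.inl le_rfl) hθ₁W rfl rfl) χ hg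
  have hlim₂ := G.tendsto_apply_of_divergence hθ₂ hdiv₂ (w := ⟨_, hθ₂ℓ⟩) rfl
    (inner_grad_indicator_eq_zero (.inr hdisj.symm) hθ₂W rfl rfl) χ hg
  obtain ⟨h, hh, hvh⟩ := SimpleGraph.exists_tendsto_and_coe_eq_grad hconn.preconnected rfl hg hlim₁
  refine ⟨h, G.harmonicOn_of_mem_orthogonal (G.harmonicPart_mem_orthogonal u) hvh,
    SimpleGraph.exists_forall_abs_le_of_coe_harmonicPart_eq_grad hconn rfl
      (fun x => by by_cases hx : x ∈ W₁ <;> simp [χ, hx]) hg hh hvh,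
    SimpleGraph.finiteDirichletEnergy_of_coe_eq_grad hvh, fun hconst => ?_⟩
  have hv : G.harmonicPart u = 0 := lp.ext (hvh.trans (funext fun ⟨x, y⟩ => by
    simp [SimpleGraph.grad, hconst x y]))
  have e₁ : h a₁ = 1 := by simpa [hv, χ, ha₁] using tendsto_nhds_unique (hh a₁) hlim₁
  have e₂ : h a₂ = 0 := by
    simpa [hv, χ, hdisj.notMem_of_mem_right ha₂] using tendsto_nhds_unique (hh a₂) hlim₂
  exact one_ne_zero (e₁.symm.trans ((hconst a₁ a₂).trans e₂))

end
end
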